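/- arXiv:2005.01847 — 2 statements merged into one kernel-verified Lean document; each statement's English description precedes it below -/
import Mathlib

section
/- Let g be as above and G(t)=∫₀ᵗ g, G̃(t)=∫₀ᵗ g⁻¹. Then for every t ≥ 0, G̃(g(t)) ≤ G(2t). -/
open MeasureTheory

theorem conjugate_of_g_le_G_two (g ginv : ℝ → ℝ)
    (hcont : ContinuousOn g (Set.Ici 0))
    (hmono : StrictMonoOn g (Set.Ici 0))
    (hg0 : g 0 = 0)
    (hginf : Filter.Tendsto g Filter.atTop Filter.atTop)
    (hgnn : ∀ t ≥ (0:ℝ), 0 ≤ g t)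
    (hleft : ∀ t ≥ (0:ℝ), ginv (g t) = t)
    (hright : ∀ t ≥ (0:ℝ), g (ginv t) = t) :
    ∀ t ≥ (0:ℝ), (∫ τ in (0:ℝ)..(g t), ginv τ) ≤ ∫ τ in (0:ℝ)..(2 * t), g τ := by
  intro t ht
  have hgt0 : 0 ≤ g t := hgnn t ht
  -- surjectivity onto [0, g t]
  have hsurj : ∀ τ ∈ Set.Icc (0:ℝ) (g t), ∃ s ∈ Set.Icc (0:ℝ) t, g s = τ := by
    intro τ hτ
    have h1 : Set.Icc (g 0) (g t) ⊆ g '' Set.Icc 0 t :=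
      intermediate_value_Icc ht (hcont.mono (fun x hx => hx.1))
    rw [hg0] at h1
    obtain ⟨s, hs, hgs⟩ := h1 hτ
    exact ⟨s, hs, hgs⟩
  have hginv_mem : ∀ τ ∈ Set.Icc (0:ℝ) (g t), ginv τ ∈ Set.Icc (0:ℝ) t := by
    intro τ hτ
    obtain ⟨s, hs, hgs⟩ := hsurj τ hτ
    rw [← hgs, hleft s hs.1]
    exact hs
  -- ginv monotone on [0, g t]
  have hginv_mono : MonotoneOn ginv (Set.Icc (0:ℝ) (g t)) := by
    intro a ha b hb hab
    obtain ⟨sa, hsa, hga⟩ := hsurj a ha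
    obtain ⟨sb, hsb, hgb⟩ := hsurj b hb
    rw [← hga, ← hgb, hleft sa hsa.1, hleft sb hsb.1]
    by_contra h
    push_neg at h
    have := hmono (Set.mem_Ici.2 hsb.1) (Set.mem_Ici.2 hsa.1) h
    rw [hga, hgb] at this
    exact absurd hab (not_le.2 this)
  have hint1 : IntervalIntegrable ginv volume 0 (g t) := by
    apply MonotoneOn.intervalIntegrable
    rwa [Set.uIcc_of_le hgt0]
  -- step 1
  have step1 : (∫ τ in (0:ℝ)..(g t), ginv τ) ≤ ∫ τ in (0:ℝ)..(g t), t := by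
    apply intervalIntegral.integral_mono_on hgt0 hint1 intervalIntegrable_const
    intro x hx
    exact (hginv_mem x hx).2
  have hconst : (∫ τ in (0:ℝ)..(g t), (t:ℝ)) = g t * t := by
    simp [mul_comm]
  -- integrability of g on intervals
  have hgint : ∀ a b : ℝ, 0 ≤ a → a ≤ b → IntervalIntegrable g volume a b := by
    intro a b ha hab
    apply ContinuousOn.intervalIntegrable
    apply hcont.mono
    rw [Set.uIcc_of_le hab]
    exact fun x hx => le_trans ha hx.1
  have ht2 : t ≤ 2 * t := by linarith
  -- step 2 : g t * t ≤ ∫ t .. 2t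
  have step2 : g t * t ≤ ∫ τ in t..(2*t), g τ := by
    have : (∫ τ in t..(2*t), g t) ≤ ∫ τ in t..(2*t), g τ := by
      apply intervalIntegral.integral_mono_on ht2 intervalIntegrable_const
        (hgint t (2*t) ht ht2)
      intro x hx
      exact hmono.monotoneOn (Set.mem_Ici.2 ht) (Set.mem_Ici.2 (le_trans ht hx.1)) hx.1
    calc g t * t = ∫ τ in t..(2*t), g t := by
          simp; ring
      _ ≤ _ := this
  -- step 3 : 0 ≤ ∫ 0..t
  have step3 : 0 ≤ ∫ τ in (0:ℝ)..t, g τ := by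
    apply intervalIntegral.integral_nonneg ht
    intro x hx
    exact hgnn x hx.1
  have hsplit : (∫ τ in (0:ℝ)..(2*t), g τ)
      = (∫ τ in (0:ℝ)..t, g τ) + ∫ τ in t..(2*t), g τ := by
    rw [intervalIntegral.integral_add_adjacent_intervals (hgint 0 t le_rfl ht)
      (hgint t (2*t) ht ht2)]
  rw [hsplit]
  calc (∫ τ in (0:ℝ)..(g t), ginv τ) ≤ g t * t := step1.trans_eq hconst
    _ ≤ ∫ τ in t..(2*t), g τ := step2
    _ ≤ _ := by linarith
end

section
/- (Fractional Poincaré inequality, modular form) Let Ω ⊂ ℝⁿ be open and bounded with diameter d, let G be a Young function and s ∈ (0,1). Then for every measurable u : ℝⁿ → ℝ vanishing outside Ω, ∫_Ω G(|u(x)|/(2C d^s)) dx ≤ ∫∫_{ℝⁿ×ℝⁿ} G(|u(x)−u(y)|/|x−y|^s) dx dy/|x−y|ⁿ, where C := max{1, 2s/(n ω_n)} and ω_n is the volume of the unit ball. -/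
/-! For `x ∈ Ω` every `y` with `‖x - y‖ > d = diam Ω` lies outside `Ω`, so there `u y = 0` and the
kernel is at least `G (|u x| / ‖x - y‖ ^ s) / ‖x - y‖ ^ n`. On the annulus
`d < ‖x - y‖ ≤ e^{1/(2s)} d` one has `‖x - y‖ ^ s ≤ 2 d ^ s`, and in polar coordinates
`∫ ‖x - y‖⁻ⁿ dy = n ω_n log (e^{1/(2s)}) = n ω_n / (2s)` over it. So the inner integral is at least
`n ω_n / (2s) · G (|u x| / (2 d ^ s)) ≥ C⁻¹ G (|u x| / (2 d ^ s))`, which dominates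
`G (|u x| / (2 C d ^ s))` by convexity of `G` and `G 0 = 0`. -/

open MeasureTheory Metric Set

theorem ConvexOn.apply_mul_le_mul_of_map_zero {G : ℝ → ℝ} (hG : ConvexOn ℝ (Ici 0) G)
    (hG0 : G 0 = 0) {c t : ℝ} (hc0 : 0 ≤ c) (hc1 : c ≤ 1) (ht : 0 ≤ t) :
    G (c * t) ≤ c * G t := by
  simpa [hG0] using hG.2 (mem_Ici.2 ht) self_mem_Ici hc0 (sub_nonneg.2 hc1) (add_sub_cancel c 1)

theorem MonotoneOn.nonneg_of_map_zero {G : ℝ → ℝ} (hG : MonotoneOn G (Ici 0)) (hG0 : G 0 = 0)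
    {t : ℝ} (ht : 0 ≤ t) : 0 ≤ G t :=
  hG0 ▸ hG self_mem_Ici ht ht

theorem Real.exp_one_div_two_mul_rpow_le_two {s : ℝ} (hs : 0 < s) : Real.exp (1 / (2 * s)) ^ s ≤ 2 := by
  rw [← Real.exp_mul, show 1 / (2 * s) * s = 1 / 2 by field_simp,
    ← Real.le_log_iff_exp_le two_pos]
  linarith [Real.log_two_gt_d9]

theorem eqOn_Ioi_pow_pred_smul_indicator_inv_pow {a b : ℝ} {k : ℕ} (hk : k ≠ 0) :
    EqOn (fun r : ℝ ↦ r ^ (k - 1) • (Ioc a b).indicator (fun r ↦ (r ^ k)⁻¹) r)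
      ((Ioc a b).indicator fun r ↦ r⁻¹) (Ioi 0) := by
  intro r (hr : 0 < r)
  by_cases hrab : r ∈ Ioc a b
  · simp only [indicator_of_mem hrab, smul_eq_mul]
    rw [← pow_sub_one_mul hk, mul_inv, ← mul_assoc, mul_inv_cancel₀ (by positivity), one_mul]
  · simp [indicator_of_notMem hrab]

theorem mul_indicator_le_fractional_kernel {E : Type*} [SeminormedAddCommGroup E]
    {G : ℝ → ℝ} (hGmono : MonotoneOn G (Ici 0)) (hG0 : G 0 = 0) {s d R : ℝ} (hs : 0 ≤ s)
    (hd : 0 < d) (hR : R ^ s ≤ 2 * d ^ s) {u : E → ℝ} {x : E}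
    (hu : ∀ y, d < ‖x - y‖ → u y = 0) (k : ℕ) (y : E) :
    G (|u x| / (2 * d ^ s)) * (Ioc d R).indicator (fun r ↦ (r ^ k)⁻¹) ‖y - x‖ ≤
      G (|u x - u y| / ‖x - y‖ ^ s) / ‖x - y‖ ^ k := by
  rw [norm_sub_rev]
  by_cases hy : ‖x - y‖ ∈ Ioc d R
  · have hxy : 0 < ‖x - y‖ := hd.trans hy.1
    rw [indicator_of_mem hy, ← div_eq_mul_inv, hu y hy.1, sub_zero]
    gcongr
    refine hGmono (mem_Ici.2 (by positivity)) (mem_Ici.2 (by positivity)) ?_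
    gcongr
    exact (Real.rpow_le_rpow hxy.le hy.2 hs).trans hR
  · rw [indicator_of_notMem hy, mul_zero]
    exact div_nonneg (hGmono.nonneg_of_map_zero hG0 (by positivity)) (by positivity)

section HaarMeasure

variable {E : Type*} [NormedAddCommGroup E] [NormedSpace ℝ E] [FiniteDimensional ℝ E]
  [MeasurableSpace E] [BorelSpace E] [Nontrivial E] (μ : Measure E) [μ.IsAddHaarMeasure]

local notation "dim" => Module.finrank ℝ E

theorem integrable_indicator_Ioc_inv_norm_pow {a b : ℝ} (ha : 0 < a) :
    Integrable (fun y : E ↦ (Ioc a b).indicator (fun r ↦ (r ^ dim)⁻¹) ‖y‖) μ := by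
  rw [integrable_fun_norm_addHaar, integrableOn_congr_fun
    (eqOn_Ioi_pow_pred_smul_indicator_inv_pow Module.finrank_pos.ne') measurableSet_Ioi]
  have hinv : IntegrableOn (fun r : ℝ ↦ r⁻¹) (Icc a b) :=
    (continuousOn_inv₀.mono fun r hr ↦ (ha.trans_le hr.1).ne').integrableOn_Icc
  exact ((hinv.mono_set Ioc_subset_Icc_self).integrable_indicator measurableSet_Ioc).integrableOn

theorem integral_indicator_Ioc_inv_norm_pow {a b : ℝ} (ha : 0 < a) (hab : a ≤ b) :
    ∫ y, (Ioc a b).indicator (fun r ↦ (r ^ dim)⁻¹) ‖y‖ ∂μ =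
      dim * μ.real (ball 0 1) * Real.log (b / a) := by
  rw [integral_fun_norm_addHaar, setIntegral_congr_fun measurableSet_Ioi
      (eqOn_Ioi_pow_pred_smul_indicator_inv_pow Module.finrank_pos.ne'),
    setIntegral_indicator measurableSet_Ioc,
    inter_eq_right.2 (Ioc_subset_Ioi_self.trans (Ioi_subset_Ioi ha.le)),
    ← intervalIntegral.integral_of_le hab, integral_inv_of_pos ha (ha.trans_le hab),
    nsmul_eq_mul, smul_eq_mul, mul_assoc]

theorem lintegral_indicator_Ioc_inv_norm_sub_pow (x : E) {a b : ℝ} (ha : 0 < a) (hab : a ≤ b) :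
    ∫⁻ y, ENNReal.ofReal ((Ioc a b).indicator (fun r ↦ (r ^ dim)⁻¹) ‖y - x‖) ∂μ =
      ENNReal.ofReal (dim * μ.real (ball 0 1) * Real.log (b / a)) := by
  have hnonneg : 0 ≤ᵐ[μ] fun y ↦ (Ioc a b).indicator (fun r ↦ (r ^ dim)⁻¹) ‖y‖ :=
    .of_forall fun y ↦ indicator_nonneg (fun r hr ↦ by have := ha.trans hr.1; positivity) _
  rw [lintegral_sub_right_eq_self (fun y ↦ ENNReal.ofReal ((Ioc a b).indicator _ ‖y‖)),
    ← ofReal_integral_eq_lintegral_ofReal (integrable_indicator_Ioc_inv_norm_pow μ ha) hnonneg,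
    integral_indicator_Ioc_inv_norm_pow μ ha hab]

variable {G : ℝ → ℝ} {s d : ℝ} {u : E → ℝ} {x : E}

theorem ofReal_mul_le_lintegral_fractional_kernel (hGmono : MonotoneOn G (Ici 0))
    (hG0 : G 0 = 0) (hs : 0 < s) (hd : 0 < d) (hu : ∀ y, d < ‖x - y‖ → u y = 0) :
    ENNReal.ofReal (dim * μ.real (ball 0 1) / (2 * s) * G (|u x| / (2 * d ^ s))) ≤
      ∫⁻ y, ENNReal.ofReal (G (|u x - u y| / ‖x - y‖ ^ s) / ‖x - y‖ ^ dim) ∂μ := by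
  set A := G (|u x| / (2 * d ^ s))
  have hA : 0 ≤ A := hGmono.nonneg_of_map_zero hG0 (by positivity)
  set R := Real.exp (1 / (2 * s)) * d
  have hdR : d ≤ R := le_mul_of_one_le_left hd.le (Real.one_le_exp (by positivity))
  have hlogR : Real.log (R / d) = 1 / (2 * s) := by
    rw [mul_div_cancel_right₀ _ hd.ne', Real.log_exp]
  have hRs : R ^ s ≤ 2 * d ^ s := by
    rw [Real.mul_rpow (Real.exp_pos _).le hd.le]
    gcongr
    exact Real.exp_one_div_two_mul_rpow_le_two hs
  calc ENNReal.ofReal (dim * μ.real (ball 0 1) / (2 * s) * A)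
      = ENNReal.ofReal A * ENNReal.ofReal (dim * μ.real (ball 0 1) * Real.log (R / d)) := by
        rw [hlogR, ← ENNReal.ofReal_mul hA]
        ring_nf
    _ = ∫⁻ y, ENNReal.ofReal A *
          ENNReal.ofReal ((Ioc d R).indicator (fun r ↦ (r ^ dim)⁻¹) ‖y - x‖) ∂μ := by
        rw [lintegral_const_mul' _ _ ENNReal.ofReal_ne_top,
          lintegral_indicator_Ioc_inv_norm_sub_pow μ x hd hdR]
    _ ≤ _ := by
        refine lintegral_mono fun y ↦ ?_
        rw [← ENNReal.ofReal_mul hA]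
        exact ENNReal.ofReal_le_ofReal
          (mul_indicator_le_fractional_kernel hGmono hG0 hs.le hd hRs hu dim y)

theorem ofReal_le_lintegral_fractional_kernel (hconv : ConvexOn ℝ (Ici 0) G)
    (hGmono : MonotoneOn G (Ici 0)) (hG0 : G 0 = 0) (hs : 0 < s) (hd : 0 < d)
    (hu : ∀ y, d < ‖x - y‖ → u y = 0) {C : ℝ}
    (hC1 : 1 ≤ C) (hC : 2 * s / (dim * μ.real (ball 0 1)) ≤ C) :
    ENNReal.ofReal (G (|u x| / (2 * C * d ^ s))) ≤
      ∫⁻ y, ENNReal.ofReal (G (|u x - u y| / ‖x - y‖ ^ s) / ‖x - y‖ ^ dim) ∂μ := by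
  have hball : 0 < μ.real (ball 0 1) :=
    ENNReal.toReal_pos (measure_ball_pos μ _ one_pos).ne' measure_ball_lt_top.ne
  have hCinv : C⁻¹ ≤ dim * μ.real (ball 0 1) / (2 * s) := by
    have : 0 < (dim : ℝ) := Nat.cast_pos.2 Module.finrank_pos
    simpa only [inv_div] using inv_anti₀ (by positivity) hC
  refine le_trans (ENNReal.ofReal_le_ofReal ?_)
    (ofReal_mul_le_lintegral_fractional_kernel μ hGmono hG0 hs hd hu)
  calc G (|u x| / (2 * C * d ^ s)) = G (C⁻¹ * (|u x| / (2 * d ^ s))) := by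
        congr 1
        field_simp
    _ ≤ C⁻¹ * G (|u x| / (2 * d ^ s)) :=
        hconv.apply_mul_le_mul_of_map_zero hG0 (by positivity) (inv_le_one_of_one_le₀ hC1)
          (by positivity)
    _ ≤ _ := by
        gcongr
        exact hGmono.nonneg_of_map_zero hG0 (by positivity)

end HaarMeasure

theorem fractional_poincare_modular_general (n : ℕ) (hn : 0 < n)
    (Ω : Set (EuclideanSpace ℝ (Fin n)))
    (hΩbdd : Bornology.IsBounded Ω)
    (s : ℝ) (hs0 : 0 < s)
    (G : ℝ → ℝ) (hconv : ConvexOn ℝ (Set.Ici 0) G) (hG0 : G 0 = 0)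
    (hGmono : MonotoneOn G (Set.Ici 0))
    (u : EuclideanSpace ℝ (Fin n) → ℝ)
    (hu0 : ∀ x ∉ Ω, u x = 0) :
    (∫⁻ x in Ω, ENNReal.ofReal
        (G (|u x| / (2 * (max 1 (2 * s / (n * (volume (Metric.ball (0 : EuclideanSpace ℝ (Fin n)) 1)).toReal)))
            * (Metric.diam Ω) ^ s))))
      ≤ ∫⁻ x, ∫⁻ y, ENNReal.ofReal
          (G (|u x - u y| / ‖x - y‖ ^ s) / ‖x - y‖ ^ n) := by
  obtain hd | hd := diam_nonneg (s := Ω) |>.eq_or_lt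
  -- `diam Ω = 0` makes the left-hand side `G (|u x| / 0) = G 0 = 0`.
  · simp [← hd, Real.zero_rpow hs0.ne', hG0]
  have hdim : Module.finrank ℝ (EuclideanSpace ℝ (Fin n)) = n := finrank_euclideanSpace_fin
  have : Nontrivial (EuclideanSpace ℝ (Fin n)) := Module.finrank_pos_iff.mp (hdim ▸ hn)
  have hinner : ∀ x, ENNReal.ofReal (G (|u x| / (2 * max 1 (2 * s / (n * volume.real
      (ball (0 : EuclideanSpace ℝ (Fin n)) 1))) * diam Ω ^ s))) ≤
        ∫⁻ y, ENNReal.ofReal (G (|u x - u y| / ‖x - y‖ ^ s) / ‖x - y‖ ^ n) := by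
    intro x
    by_cases hx : x ∈ Ω
    · have hu : ∀ y, diam Ω < ‖x - y‖ → u y = 0 := fun y hy ↦ hu0 y fun hyΩ ↦
        hy.not_ge (dist_eq_norm x y ▸ dist_le_diam_of_mem hΩbdd hx hyΩ)
      simpa only [hdim] using ofReal_le_lintegral_fractional_kernel volume hconv hGmono hG0 hs0
        hd hu (le_max_left _ _) (by rw [hdim]; exact le_max_right _ _)
    · simp [hu0 x hx, hG0]
  exact (lintegral_mono hinner).trans (setLIntegral_le_lintegral _ _)

theorem fractional_poincare_modular (n : ℕ) (hn : 0 < n)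
    (Ω : Set (EuclideanSpace ℝ (Fin n)))
    (hΩopen : IsOpen Ω) (hΩbdd : Bornology.IsBounded Ω) (hΩne : Ω.Nonempty)
    (s : ℝ) (hs0 : 0 < s) (hs1 : s < 1)
    (G : ℝ → ℝ) (hconv : ConvexOn ℝ (Set.Ici 0) G) (hG0 : G 0 = 0)
    (hGmono : MonotoneOn G (Set.Ici 0))
    (u : EuclideanSpace ℝ (Fin n) → ℝ) (hu : Measurable u)
    (hu0 : ∀ x ∉ Ω, u x = 0) :
    (∫⁻ x in Ω, ENNReal.ofReal
        (G (|u x| / (2 * (max 1 (2 * s / (n * (volume (Metric.ball (0 : EuclideanSpace ℝ (Fin n)) 1)).toReal)))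
            * (Metric.diam Ω) ^ s))))
      ≤ ∫⁻ x, ∫⁻ y, ENNReal.ofReal
          (G (|u x - u y| / ‖x - y‖ ^ s) / ‖x - y‖ ^ n) :=
  fractional_poincare_modular_general n hn Ω hΩbdd s hs0 G hconv hG0 hGmono u hu0
end
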